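/- Let p be a prime and let f be a nonzero reduced polynomial over Z_p with d the maximum of the total degrees of the monomials of f. If d = 0, then the constant polynomial 1 belongs to the polynomial linearly closed clonoid generated by {f}; if d > 0, then the monomial x_1x_2⋯x_d belongs to the polynomial linearly closed clonoid generated by {f}. -/

import Mathlib

/-- A finitary operation on `A`: an element of arity `n + 1` (so every arity is `≥ 1`). -/
abbrev Ops (A : Type) := Σ n : ℕ, ((Fin (n + 1) → A) → A)

/-- The product `E·F` of two sets of finitary operations:
all compositions `f ∘ (g₁, …, gₙ)` with `f ∈ E` and all `gᵢ ∈ F` of a common arity. -/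
def OpProd {A : Type} (E F : Set (Ops A)) : Set (Ops A) :=
  { h | ∃ (n m : ℕ) (f : (Fin (n + 1) → A) → A) (g : Fin (n + 1) → (Fin (m + 1) → A) → A),
      (⟨n, f⟩ : Ops A) ∈ E ∧ (∀ i, (⟨m, g i⟩ : Ops A) ∈ F) ∧
      h = ⟨m, fun x => f (fun i => g i x)⟩ }

/-- The set `Lin(Z_p)` of linear operations `(x₁, …, xₙ) ↦ Σ aᵢ xᵢ` on `ZMod p`. -/
def LinOps (p : ℕ) : Set (Ops (ZMod p)) :=
  { h | ∃ (n : ℕ) (a : Fin (n + 1) → ZMod p), h = ⟨n, fun x => ∑ i, a i * x i⟩ }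

/-- A linearly closed clonoid on `ZMod p`. -/
def IsLCC (p : ℕ) (C : Set (Ops (ZMod p))) : Prop :=
  C.Nonempty ∧ OpProd (LinOps p) C ⊆ C ∧ OpProd C (LinOps p) ⊆ C

/-- The sum `D₁ + D₂` of two sets of operations on `ZMod p`. -/
def LCCsum (p : ℕ) (D₁ D₂ : Set (Ops (ZMod p))) : Set (Ops (ZMod p)) :=
  { h | ∃ (n : ℕ) (f g : (Fin (n + 1) → ZMod p) → ZMod p),
      (⟨n, f⟩ : Ops (ZMod p)) ∈ D₁ ∧ (⟨n, g⟩ : Ops (ZMod p)) ∈ D₂ ∧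
      h = ⟨n, fun x => f x + g x⟩ }

/-- The linearly closed clonoid on `ZMod p` generated by a set `F` of operations. -/
def genLC (p : ℕ) (F : Set (Ops (ZMod p))) : Set (Ops (ZMod p)) :=
  ⋂₀ { C | IsLCC p C ∧ F ⊆ C }

/-- A finitely generated linearly closed clonoid on `ZMod p`. -/
def FinGenLCC (p : ℕ) (C : Set (Ops (ZMod p))) : Prop :=
  ∃ F : Set (Ops (ZMod p)), F.Finite ∧ C = genLC p F

/-- A `p`-minor subset of `ℕ`. -/
def IsPMinor (p : ℕ) (M : Set ℕ) : Prop :=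
  ∀ n ∈ M, n > p - 1 → n - (p - 1) ∈ M

/-- A reduced polynomial: every variable exponent is at most `p - 1`. -/
def IsReducedPoly (p : ℕ) (f : MvPolynomial ℕ (ZMod p)) : Prop :=
  ∀ d ∈ f.support, ∀ i, d i ≤ p - 1

/-- The `(n+1)`-ary operation on `ZMod p` induced by a polynomial
(meaningful when all variables of `f` have index `< n + 1`). -/
noncomputable def inducedOp (p n : ℕ) (f : MvPolynomial ℕ (ZMod p)) : (Fin (n + 1) → ZMod p) → ZMod p :=
  fun x => MvPolynomial.eval (fun i => if h : i < n + 1 then x ⟨i, h⟩ else 0) f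

/-- `𝒞(M)`: all constant-zero operations together with all operations induced by a nonzero
reduced polynomial each of whose monomials has total degree in `M`. -/
def CM (p : ℕ) (M : Set ℕ) : Set (Ops (ZMod p)) :=
  { h | ∃ n : ℕ, h = ⟨n, fun _ => 0⟩ } ∪
  { h | ∃ (n : ℕ) (f : MvPolynomial ℕ (ZMod p)), f ≠ 0 ∧ IsReducedPoly p f ∧
      (∀ i ∈ f.vars, i < n + 1) ∧ (∀ d ∈ f.support, (d.sum fun _ e => e) ∈ M) ∧
      h = ⟨n, inducedOp p n f⟩ }

/-- `𝒫(M)`: polynomials each of whose monomials has total degree in `M` (this includes `0`). -/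
def PM (p : ℕ) (M : Set ℕ) : Set (MvPolynomial ℕ (ZMod p)) :=
  { f | ∀ d ∈ f.support, (d.sum fun _ e => e) ∈ M }

/-- The set `L` of linear polynomials `Σ aᵢ xᵢ`. -/
def LinPoly (p : ℕ) : Set (MvPolynomial ℕ (ZMod p)) :=
  { f | ∃ (s : Finset ℕ) (a : ℕ → ZMod p),
      f = ∑ i ∈ s, MvPolynomial.C (a i) * MvPolynomial.X i }

/-- The product `A·B` of two sets of polynomials: substitute members of `B` for the
variables of a member of `A` (regarded as `n`-ary). -/
def PolyProd (p : ℕ) (A B : Set (MvPolynomial ℕ (ZMod p))) :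
    Set (MvPolynomial ℕ (ZMod p)) :=
  { h | ∃ (n : ℕ) (f : MvPolynomial ℕ (ZMod p)) (g : ℕ → MvPolynomial ℕ (ZMod p)),
      f ∈ A ∧ (∀ i ∈ f.vars, i < n) ∧ (∀ i < n, g i ∈ B) ∧ h = MvPolynomial.aeval g f }

/-- A polynomial linearly closed clonoid. -/
def IsPLC (p : ℕ) (C : Set (MvPolynomial ℕ (ZMod p))) : Prop :=
  C.Nonempty ∧ PolyProd p (LinPoly p) C ⊆ C ∧ PolyProd p C (LinPoly p) ⊆ C

/-- The polynomial linearly closed clonoid generated by `F`. -/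
def genPLC (p : ℕ) (F : Set (MvPolynomial ℕ (ZMod p))) : Set (MvPolynomial ℕ (ZMod p)) :=
  ⋂₀ { C | IsPLC p C ∧ F ⊆ C }

/-- A clone on `A`: contains all projections and is closed under composition. -/
def IsClone {A : Type} (C : Set (Ops A)) : Prop :=
  (∀ (n : ℕ) (j : Fin (n + 1)), (⟨n, fun x => x j⟩ : Ops A) ∈ C) ∧ OpProd C C ⊆ C

/-- The clone generated by a set of operations. -/
def cloneGen {A : Type} (F : Set (Ops A)) : Set (Ops A) :=
  ⋂₀ { C | IsClone C ∧ F ⊆ C }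

/-- A finitely generated clone. -/
def FinGenClone {A : Type} (C : Set (Ops A)) : Prop :=
  ∃ F : Set (Ops A), F.Finite ∧ C = cloneGen F

/-- The binary addition operation, as a finitary operation. -/
def plusOp (A : Type) [Add A] : Ops A := ⟨1, fun x => x 0 + x 1⟩

/-- The set of all projections. -/
def ProjOps (A : Type) : Set (Ops A) :=
  { h | ∃ (n : ℕ) (j : Fin (n + 1)), h = ⟨n, fun x => x j⟩ }

/-- A linearly closed iterative algebra on `ZMod p`. -/
def IsLCIA (p : ℕ) (C : Set (Ops (ZMod p))) : Prop :=
  IsLCC p C ∧ OpProd C (C ∪ ProjOps (ZMod p)) ⊆ C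

/-- The clone `Aff(Z_p)` of affine operations `(x₁, …, xₙ) ↦ c + Σ aᵢ xᵢ`. -/
def AffOps (p : ℕ) : Set (Ops (ZMod p)) :=
  { h | ∃ (n : ℕ) (c : ZMod p) (a : Fin (n + 1) → ZMod p),
      h = ⟨n, fun x => c + ∑ i, a i * x i⟩ }

/-- An operation preserves an automorphism `π` of `(ZMod p, +)`. -/
def PreservesAut {p : ℕ} (h : Ops (ZMod p)) (π : AddAut (ZMod p)) : Prop :=
  ∀ x : Fin (h.1 + 1) → ZMod p, h.2 (fun i => π (x i)) = π (h.2 x)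

/-- An operation preserves the unary relation `{0}`. -/
def Preserves0 {p : ℕ} (h : Ops (ZMod p)) : Prop :=
  h.2 (fun _ => 0) = 0

/-- The embedding `φ` of linearly closed clonoids on `ZMod p` into sets of operations
on `ZMod p × ZMod p`. -/
def phiMap (p : ℕ) (C : Set (Ops (ZMod p))) : Set (Ops (ZMod p × ZMod p)) :=
  { h | ∃ (n : ℕ) (l₁ l₂ f : (Fin (n + 1) → ZMod p) → ZMod p),
      (⟨n, l₁⟩ : Ops (ZMod p)) ∈ LinOps p ∧ (⟨n, l₂⟩ : Ops (ZMod p)) ∈ LinOps p ∧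
      (⟨n, f⟩ : Ops (ZMod p)) ∈ C ∧
      h = ⟨n, fun x => (l₁ (fun i => (x i).1) + f (fun i => (x i).2),
                        l₂ (fun i => (x i).2))⟩ }

/-!
Choose a monomial `x^m` of `f` of maximal degree `d` and polarize `f`: substitute for each `x_i`
a sum of `m_i` of the variables `x_0, …, x_{d-1}`, each of them used exactly once. Grading the new
variables by the old variable they replace, only `x^m` contributes to the coefficient of
`x_0 ⋯ x_{d-1}`, which is therefore `coeff_m(f) · ∏ m_i!`; it is nonzero because `f` is reduced,
so `m_i < p`. The polarized polynomial has degree at most `d`, so the alternating sum over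
`S ⊆ {0, …, d-1}` of its specializations at `x_j = 0` (`j ∈ S`) is that coefficient times
`x_0 ⋯ x_{d-1}`. Polarizing and setting variables to zero are linear substitutions, so everything
stays in the clonoid generated by `f`. For `d = 0` the same argument yields the constant `1`.
-/

open Finset
open scoped Nat

namespace Finsupp

variable {σ M : Type*} [AddCommMonoidWithOne M]

theorem sum_single_one_apply [DecidableEq σ] (s : Finset σ) (k : σ) :
    (∑ j ∈ s, single j (1 : M)) k = if k ∈ s then 1 else 0 := by
  simp [finsetSum_apply, single_apply]

theorem support_sum_single_one [NeZero (1 : M)] (s : Finset σ) :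
    (∑ j ∈ s, single j (1 : M)).support = s := by
  classical
  ext k
  simp [sum_single_one_apply]

theorem degree_weight_single_one {ι κ : Type*} (τ : κ → ι) (μ : κ →₀ ℕ) :
    (weight (fun j => single (τ j) 1) μ).degree = μ.degree := by
  rw [weight_apply, sum, map_sum]
  simp only [smul_single_one, degree_single]
  rfl

theorem eq_sum_single_one_of_subset_support {s : Finset σ} {μ : σ →₀ ℕ} (hs : s ⊆ μ.support)
    (hμ : μ.degree ≤ #s) : μ = ∑ j ∈ s, single j 1 := by
  classical
  have hle : ∑ j ∈ s, single j 1 ≤ μ := fun k => by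
    rw [sum_single_one_apply]
    split_ifs with hk
    · exact Nat.one_le_iff_ne_zero.2 (mem_support_iff.1 (hs hk))
    · exact Nat.zero_le _
  have hdeg : (μ - ∑ j ∈ s, single j 1).degree = 0 := by
    have := congrArg degree (tsub_add_cancel_of_le hle)
    simp only [map_add, map_sum, degree_single, sum_const, smul_eq_mul, mul_one] at this
    omega
  rw [degree_eq_zero_iff, tsub_eq_zero_iff_le] at hdeg
  exact le_antisymm hdeg hle

theorem exists_sum_range_single_eq {ι : Type*} [Nonempty ι] (m : ι →₀ ℕ) :
    ∃ τ : ℕ → ι, ∑ j ∈ range m.degree, single (τ j) 1 = m := by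
  induction h : m.degree generalizing m with
  | zero => exact ⟨fun _ => Classical.arbitrary ι, by simp [← (degree_eq_zero_iff m).1 h]⟩
  | succ n ih =>
    obtain ⟨a, ha⟩ : ∃ a, m a ≠ 0 := by
      by_contra! hm
      simp [show m = 0 from ext hm] at h
    have hcancel := sub_add_single_one_cancel ha
    obtain ⟨τ, hτ⟩ := ih (m - single a 1) (by
      have := congrArg degree hcancel
      rw [map_add, degree_single, h] at this
      omega)
    refine ⟨Function.update τ n a, ?_⟩
    rw [sum_range_succ, Function.update_self, Finset.sum_congr rfl fun j hj =>
      by rw [Function.update_of_ne (mem_range.1 hj).ne], hτ, hcancel]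

end Finsupp

namespace MvPolynomial

theorem exists_forall_mem_vars_lt {R : Type*} [CommSemiring R] (q : MvPolynomial ℕ R) :
    ∃ n, ∀ i ∈ q.vars, i < n :=
  ⟨q.vars.sup id + 1, fun _ hi => Nat.lt_succ_of_le (le_sup (f := id) hi)⟩

section DisjointVariables

variable {σ R : Type*} [CommSemiring R]

theorem coeff_mul_of_supported_compl {A : Set σ} {q r : MvPolynomial σ R} {μ ν : σ →₀ ℕ}
    (hq : q ∈ supported R A) (hr : r ∈ supported R Aᶜ)
    (hμ : μ ∈ Finsupp.supported ℕ ℕ A) (hν : ν ∈ Finsupp.supported ℕ ℕ Aᶜ) :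
    coeff (μ + ν) (q * r) = coeff μ q * coeff ν r := by
  classical
  rw [mem_supported] at hq hr
  rw [Finsupp.mem_supported] at hμ hν
  rw [coeff_mul, Finset.sum_eq_single (μ, ν) _ (by simp)]
  rintro ⟨a, b⟩ hab hne
  rw [HasAntidiagonal.mem_antidiagonal] at hab
  by_contra hcoeff
  have ha : ↑a.support ⊆ A := fun k hk =>
    hq (support_subset_vars_of_mem_support (mem_support_iff.2 (left_ne_zero_of_mul hcoeff)) hk)
  have hb : ↑b.support ⊆ Aᶜ := fun k hk =>
    hr (support_subset_vars_of_mem_support (mem_support_iff.2 (right_ne_zero_of_mul hcoeff)) hk)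
  have hzero : ∀ (c : σ →₀ ℕ) (B : Set σ), ↑c.support ⊆ B → ∀ k ∉ B, c k = 0 :=
    fun c B hc k hk => Finsupp.notMem_support_iff.1 fun h => hk (hc h)
  have haμ : a = μ := by
    ext k
    have hk := DFunLike.congr_fun hab k
    simp only [Finsupp.add_apply] at hk
    by_cases hkA : k ∈ A
    · rwa [hzero b _ hb k (by simpa), hzero ν _ hν k (by simpa), add_zero, add_zero] at hk
    · rw [hzero a _ ha k hkA, hzero μ _ hμ k hkA]
  subst haμ
  exact hne (Prod.ext rfl (add_left_cancel hab))

theorem coeff_sum_prod_of_pairwiseDisjoint {ι : Type*} {s : Finset ι} {V : ι → Set σ}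
    (hV : (s : Set ι).PairwiseDisjoint V) {q : ι → MvPolynomial σ R} {μ : ι → σ →₀ ℕ}
    (hq : ∀ i ∈ s, q i ∈ supported R (V i)) (hμ : ∀ i ∈ s, μ i ∈ Finsupp.supported ℕ ℕ (V i)) :
    coeff (∑ i ∈ s, μ i) (∏ i ∈ s, q i) = ∏ i ∈ s, coeff (μ i) (q i) := by
  classical
  induction s using Finset.induction_on with
  | empty => simp
  | insert a s ha ih =>
    have hV' : (s : Set ι).PairwiseDisjoint V := hV.subset (by simp)
    have hsub : ∀ i ∈ s, V i ⊆ (V a)ᶜ := fun i hi =>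
      Set.subset_compl_iff_disjoint_left.2
        (hV (by simp) (by simp [hi]) (by rintro rfl; exact ha hi))
    rw [sum_insert ha, prod_insert ha, prod_insert ha,
      coeff_mul_of_supported_compl (hq a (mem_insert_self a s))
        (Subalgebra.prod_mem _ fun i hi => supported_mono (hsub i hi) (hq i (mem_insert_of_mem hi)))
        (hμ a (mem_insert_self a s))
        (Submodule.sum_mem _ fun i hi =>
          Finsupp.supported_mono (hsub i hi) (hμ i (mem_insert_of_mem hi))),
      ih hV' (fun i hi => hq i (mem_insert_of_mem hi)) (fun i hi => hμ i (mem_insert_of_mem hi))]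

theorem coeff_sum_single_sum_X_pow_card (s : Finset σ) :
    coeff (∑ j ∈ s, Finsupp.single j 1) ((∑ j ∈ s, X j : MvPolynomial σ R) ^ #s) = ((#s)! : R) := by
  classical
  set e : σ →₀ ℕ := ∑ j ∈ s, Finsupp.single j 1
  have hsupp : e.support = s := Finsupp.support_sum_single_one s
  have hone : ∀ j ∈ s, e j = 1 := fun j hj => by simp [e, Finsupp.sum_single_one_apply, hj]
  have hdeg : ∑ j ∈ s, e j = #s := by rw [sum_congr rfl hone, card_eq_sum_ones]
  have hmult : e.multinomial = (#s)! := by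
    rw [Finsupp.multinomial_eq_of_support_subset hsupp.subset, ← hdeg]
    have := Nat.multinomial_spec s e
    rwa [prod_eq_one fun j hj => by rw [hone j hj, Nat.factorial_one], one_mul] at this
  have hX : (∑ j ∈ s, X j : MvPolynomial σ R) =
      Finsupp.linearCombination R X (∑ j ∈ s, Finsupp.single j 1) := by
    simp [map_sum]
  rw [hX, coeff_linearCombination_X_pow, Finsupp.sum, hsupp, if_pos hdeg, hmult, Finsupp.prod,
    hsupp, prod_eq_one fun j hj => by simp [Finsupp.sum_single_one_apply, hj], mul_one]
end DisjointVariables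

section Polarization

variable {ι κ R : Type*} [CommSemiring R]

theorem coeff_aeval_eq_of_isWeightedHomogeneous {g : ι → MvPolynomial κ R} {w : κ → ι →₀ ℕ}
    (hg : ∀ i, IsWeightedHomogeneous w (g i) (Finsupp.single i 1))
    (f : MvPolynomial ι R) (μ : κ →₀ ℕ) :
    coeff μ (aeval g f) = coeff (Finsupp.weight w μ) f *
      coeff μ (aeval g (monomial (Finsupp.weight w μ) 1)) := by
  have hmono : ∀ m : ι →₀ ℕ, IsWeightedHomogeneous w (aeval g (monomial m 1)) m := by
    intro m
    rw [aeval_monomial, map_one, one_mul]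
    convert IsWeightedHomogeneous.prod m.support _ _ fun i _ => (hg i).pow (m i)
    · rfl
    · simp_rw [Finsupp.smul_single_one]
      exact (Finsupp.sum_single m).symm
  have hterm : ∀ m, coeff μ (aeval g (monomial m (coeff m f))) =
      coeff m f * coeff μ (aeval g (monomial m 1)) := fun m => by
    simp only [aeval_monomial, algebraMap_eq, map_one, one_mul, coeff_C_mul]
  conv_lhs => rw [as_sum f, map_sum, coeff_sum]
  rw [sum_eq_single (Finsupp.weight w μ) (fun m _ hm => ?_) (fun hm => ?_), hterm]
  · rw [hterm, (hmono m).coeff_eq_zero μ (Ne.symm hm), mul_zero]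
  · rw [hterm, notMem_support_iff.1 hm, zero_mul]

variable [DecidableEq ι]

noncomputable def polarize (R : Type*) [CommSemiring R] (s : Finset κ) (τ : κ → ι) (i : ι) :
    MvPolynomial κ R :=
  ∑ j ∈ s with τ j = i, X j

variable (s : Finset κ) (τ : κ → ι)

theorem isWeightedHomogeneous_polarize (i : ι) :
    IsWeightedHomogeneous (fun j => Finsupp.single (τ j) 1) (polarize R s τ i)
      (Finsupp.single i 1) :=
  IsWeightedHomogeneous.sum _ _ _ fun j hj => by
    rw [← (mem_filter.1 hj).2]
    exact isWeightedHomogeneous_X R _ j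

theorem totalDegree_aeval_polarize_le (f : MvPolynomial ι R) :
    (aeval (polarize R s τ) f).totalDegree ≤ f.totalDegree := by
  refine Finset.sup_le fun μ hμ => ?_
  rw [mem_support_iff, coeff_aeval_eq_of_isWeightedHomogeneous
    (isWeightedHomogeneous_polarize s τ)] at hμ
  exact (Finsupp.degree_weight_single_one τ μ).symm.trans_le
    (le_totalDegree (mem_support_iff.2 (left_ne_zero_of_mul hμ)))

theorem sum_single_comp_apply (i : ι) :
    (∑ j ∈ s, Finsupp.single (τ j) 1 : ι →₀ ℕ) i = #{j ∈ s | τ j = i} := by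
  rw [Finsupp.finsetSum_apply, card_filter]
  simp [Finsupp.single_apply]

theorem coeff_aeval_polarize (f : MvPolynomial ι R) :
    coeff (∑ j ∈ s, Finsupp.single j 1) (aeval (polarize R s τ) f) =
      coeff (∑ j ∈ s, Finsupp.single (τ j) 1) f *
        ∏ i ∈ (∑ j ∈ s, Finsupp.single (τ j) 1 : ι →₀ ℕ).support,
          (((∑ j ∈ s, Finsupp.single (τ j) 1 : ι →₀ ℕ) i)! : R) := by
  set m : ι →₀ ℕ := ∑ j ∈ s, Finsupp.single (τ j) 1 with hm
  have hweight :
      Finsupp.weight (fun j => Finsupp.single (τ j) 1) (∑ j ∈ s, Finsupp.single j 1) = m := by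
    simp [hm, map_sum, Finsupp.weight_single]
  rw [coeff_aeval_eq_of_isWeightedHomogeneous (isWeightedHomogeneous_polarize s τ), hweight,
    aeval_monomial, map_one, one_mul, Finsupp.prod]
  congr 1
  have hmaps : ∀ j ∈ s, τ j ∈ m.support := fun j hj => by
    rw [Finsupp.mem_support_iff, hm, sum_single_comp_apply]
    exact (card_pos.2 ⟨j, by simp [hj]⟩).ne'
  rw [← sum_fiberwise_of_maps_to hmaps, coeff_sum_prod_of_pairwiseDisjoint
    (V := fun i => ↑({j ∈ s | τ j = i} : Finset κ))]
  · refine prod_congr rfl fun i _ => ?_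
    rw [hm, sum_single_comp_apply]
    exact coeff_sum_single_sum_X_pow_card _
  · intro i _ i' _ hii'
    exact disjoint_coe.2 (disjoint_filter.2 fun j _ h h' => hii' (h.symm.trans h'))
  · exact fun i _ => Subalgebra.pow_mem _
      (Subalgebra.sum_mem _ fun j hj => Algebra.subset_adjoin (Set.mem_image_of_mem X hj)) _
  · exact fun i _ => Submodule.sum_mem _ fun j hj => Finsupp.single_mem_supported ℕ 1 hj

end Polarization

section InclusionExclusion

variable {σ R : Type*} [DecidableEq σ]

section CommSemiring

variable [CommSemiring R]

noncomputable def killVars (S : Finset σ) : MvPolynomial σ R →ₐ[R] MvPolynomial σ R :=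
  aeval fun k => if k ∈ S then 0 else X k

theorem killVars_monomial (S : Finset σ) (u : σ →₀ ℕ) (a : R) :
    killVars S (monomial u a) = if Disjoint u.support S then monomial u a else 0 := by
  rw [killVars, aeval_monomial, algebraMap_eq, Finsupp.prod]
  split_ifs with hu
  · rw [monomial_eq, Finsupp.prod]
    congr 1
    exact prod_congr rfl fun k hk => by rw [if_neg (disjoint_left.1 hu hk)]
  · obtain ⟨k, hku, hkS⟩ := not_disjoint_iff.1 hu
    rw [prod_eq_zero hku (by rw [if_pos hkS, zero_pow (Finsupp.mem_support_iff.1 hku)]), mul_zero]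

theorem coeff_killVars (S : Finset σ) (G : MvPolynomial σ R) (μ : σ →₀ ℕ) :
    coeff μ (killVars S G) = if Disjoint μ.support S then coeff μ G else 0 := by
  induction G using MvPolynomial.induction_on' with
  | monomial u a =>
    rw [killVars_monomial, coeff_monomial]
    by_cases hu : u = μ
    · subst hu
      split_ifs <;> simp_all
    · split_ifs <;> simp [coeff_monomial, hu]
  | add p q hp hq =>
    rw [map_add, coeff_add, hp, hq, coeff_add]
    split_ifs <;> simp

end CommSemiring

variable [CommRing R]

theorem coeff_sum_powerset_killVars (U : Finset σ) (G : MvPolynomial σ R) (μ : σ →₀ ℕ) :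
    coeff μ (∑ S ∈ U.powerset, (-1 : ℤ) ^ #S • killVars S G) =
      if U ⊆ μ.support then coeff μ G else 0 := by
  simp only [coeff_sum, coeff_smul, coeff_killVars, smul_ite, smul_zero, ← sum_filter,
    ← sum_smul]
  have hfilter : {S ∈ U.powerset | Disjoint μ.support S} = (U \ μ.support).powerset := by
    ext S
    simp [subset_sdiff, disjoint_comm]
  rw [hfilter, sum_powerset_neg_one_pow_card]
  simp only [sdiff_eq_empty_iff_subset, ite_smul, one_smul, zero_smul]

theorem sum_powerset_killVars_eq_monomial (U : Finset σ) (G : MvPolynomial σ R)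
    (hG : G.totalDegree ≤ #U) :
    ∑ S ∈ U.powerset, (-1 : ℤ) ^ #S • killVars S G =
      monomial (∑ j ∈ U, Finsupp.single j 1) (coeff (∑ j ∈ U, Finsupp.single j 1) G) := by
  ext μ
  rw [coeff_sum_powerset_killVars, coeff_monomial]
  split_ifs with hU hμ hμ
  · rw [hμ]
  · exact coeff_eq_zero_of_totalDegree_lt (hG.trans_lt (not_le.1 fun h =>
      hμ (Finsupp.eq_sum_single_one_of_subset_support hU h).symm))
  · exact absurd (hμ ▸ (Finsupp.support_sum_single_one U).superset) hU
  · rfl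

end InclusionExclusion

end MvPolynomial

namespace ZMod

theorem natCast_factorial_ne_zero {p n : ℕ} [hp : Fact p.Prime] (hn : n < p) :
    (n ! : ZMod p) ≠ 0 := by
  rw [Ne, natCast_eq_zero_iff, hp.out.dvd_factorial]
  omega

end ZMod

theorem sum_X_mem_linPoly {p : ℕ} (s : Finset ℕ) : ∑ j ∈ s, MvPolynomial.X j ∈ LinPoly p :=
  ⟨s, fun _ => 1, by simp⟩

namespace IsPLC

open MvPolynomial

variable {p : ℕ} {C : Set (MvPolynomial ℕ (ZMod p))}

theorem aeval_mem (hC : IsPLC p C) {q : MvPolynomial ℕ (ZMod p)} (hq : q ∈ C)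
    {g : ℕ → MvPolynomial ℕ (ZMod p)} (hg : ∀ i, g i ∈ LinPoly p) : aeval g q ∈ C := by
  obtain ⟨n, hn⟩ := exists_forall_mem_vars_lt q
  exact hC.2.2 ⟨n, q, g, hq, hn, fun i _ => hg i, rfl⟩

theorem aeval_linPoly_mem (hC : IsPLC p C) {l : MvPolynomial ℕ (ZMod p)} (hl : l ∈ LinPoly p)
    {g : ℕ → MvPolynomial ℕ (ZMod p)} (hg : ∀ i, g i ∈ C) : aeval g l ∈ C := by
  obtain ⟨n, hn⟩ := exists_forall_mem_vars_lt l
  exact hC.2.1 ⟨n, l, g, hl, hn, fun i _ => hg i, rfl⟩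

def toSubmodule (hC : IsPLC p C) : Submodule (ZMod p) (MvPolynomial ℕ (ZMod p)) where
  carrier := C
  zero_mem' := by
    obtain ⟨q, hq⟩ := hC.1
    simpa using hC.aeval_linPoly_mem (l := 0) ⟨∅, 0, by simp⟩ (g := fun _ => q) fun _ => hq
  add_mem' := fun {q r} hq hr => by
    have := hC.aeval_linPoly_mem (l := X 0 + X 1) ⟨{0, 1}, 1, by simp⟩
      (g := fun i => if i = 0 then q else r) fun i => by split_ifs; exacts [hq, hr]
    rwa [map_add, aeval_X, aeval_X, if_pos rfl, if_neg one_ne_zero] at this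
  smul_mem' := fun c q hq => by
    have := hC.aeval_linPoly_mem (l := MvPolynomial.C c * X 0) ⟨{0}, fun _ => c, by simp⟩
      (g := fun _ => q) fun _ => hq
    rwa [map_mul, aeval_C, aeval_X, algebraMap_eq, ← smul_eq_C_mul] at this

theorem killVars_mem (hC : IsPLC p C) {q : MvPolynomial ℕ (ZMod p)} (hq : q ∈ C)
    (S : Finset ℕ) : killVars S q ∈ C :=
  hC.aeval_mem hq fun k => by
    split_ifs
    · simpa using sum_X_mem_linPoly (p := p) ∅
    · simpa using sum_X_mem_linPoly (p := p) {k}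

theorem aeval_polarize_mem (hC : IsPLC p C) {q : MvPolynomial ℕ (ZMod p)} (hq : q ∈ C)
    (s : Finset ℕ) (τ : ℕ → ℕ) : aeval (polarize (ZMod p) s τ) q ∈ C :=
  hC.aeval_mem hq fun _ => sum_X_mem_linPoly _

theorem prod_range_X_mem [hp : Fact p.Prime] (hC : IsPLC p C) {f : MvPolynomial ℕ (ZMod p)}
    (hf : f ∈ C) (hf0 : f ≠ 0) (hred : IsReducedPoly p f) :
    ∏ i ∈ range f.totalDegree, X i ∈ C := by
  classical
  set d := f.totalDegree
  obtain ⟨m, hm, hmd⟩ : ∃ m ∈ f.support, m.degree = d := by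
    obtain ⟨m, hm, hmd⟩ := exists_mem_eq_sup f.support (support_nonempty.2 hf0) Finsupp.degree
    exact ⟨m, hm, hmd.symm⟩
  obtain ⟨τ, hτ⟩ := Finsupp.exists_sum_range_single_eq m
  rw [hmd] at hτ
  have hT : ∑ S ∈ (range d).powerset,
      (-1 : ℤ) ^ #S • killVars S (aeval (polarize (ZMod p) (range d) τ) f) ∈ hC.toSubmodule :=
    sum_mem fun S _ => zsmul_mem (hC.killVars_mem (hC.aeval_polarize_mem hf _ τ) S) _
  rw [sum_powerset_killVars_eq_monomial _ _
    ((totalDegree_aeval_polarize_le _ _ f).trans (card_range d).ge), coeff_aeval_polarize, hτ] at hT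
  have hc : coeff m f * ∏ i ∈ m.support, ((m i)! : ZMod p) ≠ 0 :=
    mul_ne_zero (mem_support_iff.1 hm) <| prod_ne_zero_iff.2 fun i _ =>
      ZMod.natCast_factorial_ne_zero ((hred m hm i).trans_lt (Nat.sub_lt hp.out.pos one_pos))
  have := hC.toSubmodule.smul_mem (coeff m f * ∏ i ∈ m.support, ((m i)! : ZMod p))⁻¹ hT
  rwa [smul_monomial, smul_eq_mul, inv_mul_cancel₀ hc, monomial_sum_one] at this

end IsPLC

/-- Let `f` be a nonzero reduced polynomial over `ZMod p` and `d` the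
maximum of the total degrees of its monomials. If `d = 0`, then `1` belongs to the
polynomial linearly closed clonoid generated by `{f}`; if `d > 0`, then the monomial
`x₀x₁⋯x_{d-1}` belongs to it. -/
theorem statement10 (p : ℕ) (hp : p.Prime) (f : MvPolynomial ℕ (ZMod p))
    (hf0 : f ≠ 0) (hred : IsReducedPoly p f) :
    (f.totalDegree = 0 → (1 : MvPolynomial ℕ (ZMod p)) ∈ genPLC p {f}) ∧
    (0 < f.totalDegree →
      (∏ i ∈ Finset.range f.totalDegree, MvPolynomial.X i) ∈ genPLC p {f}) := by
  have := Fact.mk hp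
  have hmem : ∏ i ∈ Finset.range f.totalDegree, MvPolynomial.X i ∈ genPLC p {f} :=
    fun C ⟨hC, hfC⟩ => hC.prod_range_X_mem (hfC rfl) hf0 hred
  exact ⟨fun hd => by simpa [hd] using hmem, fun _ => hmem⟩
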